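/- arXiv:1904.12563 — 2 statements merged into one kernel-verified Lean document; each statement's English description precedes it below -/
import Mathlib

section
/- Let S be a unital ring, σ an injective endomorphism, and f ∈ S[t;σ] of degree m ≥ 2 with invertible leading coefficient. The Petit algebra S_f = S[t;σ]/S[t;σ]f is associative if and only if S[t;σ]f is a two-sided ideal of S[t;σ]. -/
open Finset

/-- `g` has degree `< n`: `g = ∑_{i < n} ι(aᵢ) tⁱ`. -/
def DegLT {S R : Type*} [Ring S] [Ring R] (ι : S →+* R) (t : R) (g : R) (n : ℕ) : Prop :=
  ∃ a : ℕ → S, g = ∑ i ∈ range n, ι (a i) * t ^ i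

/-- The multiplication of the Petit algebra `S_f`, relationally: `r = g∘h = g·h mod_r f`. -/
def PetitMulRel {S R : Type*} [Ring S] [Ring R] (ι : S →+* R) (t : R) (f : R) (m : ℕ)
    (g h r : R) : Prop :=
  DegLT ι t r m ∧ ∃ q : R, g * h = q * f + r

section Helpers
variable {S R : Type*} [Ring S] [Ring R] (ι : S →+* R) (t : R)

lemma degLT_zero (n : ℕ) : DegLT ι t (0:R) n :=
  ⟨fun _ => 0, by simp⟩

lemma degLT_mono {g : R} {n n' : ℕ} (h : DegLT ι t g n) (hn : n ≤ n') : DegLT ι t g n' := by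
  classical
  obtain ⟨a, ha⟩ := h
  refine ⟨fun i => if i < n then a i else 0, ?_⟩
  rw [ha, ← Finset.sum_subset (Finset.range_subset_range.2 hn)]
  · exact Finset.sum_congr rfl fun i hi => by simp [Finset.mem_range.1 hi]
  · intro i _ hi
    rw [Finset.mem_range] at hi
    simp [hi]

lemma degLT_add {g h : R} {n : ℕ} (hg : DegLT ι t g n) (hh : DegLT ι t h n) :
    DegLT ι t (g + h) n := by
  obtain ⟨a, ha⟩ := hg; obtain ⟨c, hc⟩ := hh
  exact ⟨fun i => a i + c i, by simp [ha, hc, add_mul, Finset.sum_add_distrib]⟩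

lemma degLT_neg {g : R} {n : ℕ} (hg : DegLT ι t g n) : DegLT ι t (-g) n := by
  obtain ⟨a, ha⟩ := hg
  exact ⟨fun i => -(a i), by simp [ha, Finset.sum_neg_distrib]⟩

lemma degLT_sub {g h : R} {n : ℕ} (hg : DegLT ι t g n) (hh : DegLT ι t h n) :
    DegLT ι t (g - h) n := by
  rw [sub_eq_add_neg]; exact degLT_add ι t hg (degLT_neg ι t hh)

lemma degLT_monomial {c : S} {k n : ℕ} (hk : k < n) : DegLT ι t (ι c * t ^ k) n := by
  classical
  refine ⟨fun i => if i = k then c else 0, ?_⟩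
  have : ∀ i ∈ range n, ι (if i = k then c else 0) * t ^ i
      = if i = k then ι c * t ^ i else 0 := by
    intro i _; split_ifs <;> simp
  rw [Finset.sum_congr rfl this, Finset.sum_ite_eq' (range n) k (fun i => ι c * t ^ i)]
  simp [hk]

lemma degLT_smul {g : R} {n : ℕ} (s : S) (hg : DegLT ι t g n) : DegLT ι t (ι s * g) n := by
  obtain ⟨a, ha⟩ := hg
  refine ⟨fun i => s * a i, ?_⟩
  simp [ha, Finset.mul_sum, map_mul, mul_assoc]

end Helpers

section Comm
variable {S R : Type*} [Ring S] [Ring R] (σ : S →+* S) (ι : S →+* R) (t : R)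
    (hrel : ∀ a : S, t * ι a = ι (σ a) * t)
include hrel

lemma pow_mul_iota (k : ℕ) (c : S) : t ^ k * ι c = ι ((σ ^ k) c) * t ^ k := by
  induction k generalizing c with
  | zero => simp
  | succ k ih =>
    have h1 : t ^ (k+1) * ι c = t ^ k * (t * ι c) := by rw [pow_succ, mul_assoc]
    rw [h1, hrel, ← mul_assoc, ih (σ c), mul_assoc, ← pow_succ t, pow_succ σ]
    rfl

lemma mono_mul_mono (c d : S) (i j : ℕ) :
    (ι c * t ^ i) * (ι d * t ^ j) = ι (c * (σ ^ i) d) * t ^ (i + j) := by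
  rw [mul_assoc, ← mul_assoc (t ^ i), pow_mul_iota σ ι t hrel, map_mul]
  rw [mul_assoc, mul_assoc, ← pow_add]

end Comm

section Basis
variable {S R : Type*} [Ring S] [Ring R] (ι : S →+* R) (t : R)
    (hbasis : ∀ g : R, ∃! a : ℕ →₀ S, g = a.sum fun i c => ι c * t ^ i)
include hbasis

lemma coeff_unique {N : ℕ} {a a' : ℕ → S}
    (h : ∑ i ∈ range N, ι (a i) * t ^ i = ∑ i ∈ range N, ι (a' i) * t ^ i) :
    ∀ i < N, a i = a' i := by
  classical
  set F : (ℕ →₀ S) →+ R :=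
    Finsupp.liftAddHom (fun i => (AddMonoidHom.mulRight (t ^ i)).comp ι.toAddMonoidHom) with hF
  have hFs : ∀ (A : ℕ →₀ S), F A = A.sum fun i c => ι c * t ^ i := fun A => rfl
  have hFsingle : ∀ (i : ℕ) (c : S), F (Finsupp.single i c) = ι c * t ^ i := by
    intro i c; simp [hF]
  set A : ℕ →₀ S := ∑ i ∈ range N, Finsupp.single i (a i) with hA
  set A' : ℕ →₀ S := ∑ i ∈ range N, Finsupp.single i (a' i) with hA'
  have hFA : F A = ∑ i ∈ range N, ι (a i) * t ^ i := by
    rw [hA, map_sum]; exact Finset.sum_congr rfl fun i _ => hFsingle i (a i)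
  have hFA' : F A' = ∑ i ∈ range N, ι (a' i) * t ^ i := by
    rw [hA', map_sum]; exact Finset.sum_congr rfl fun i _ => hFsingle i (a' i)
  have hAA' : A = A' := by
    obtain ⟨B, _, hu⟩ := hbasis (∑ i ∈ range N, ι (a i) * t ^ i)
    have h1 : A = B := hu A ((hFs A).symm.trans hFA).symm
    have h2 : A' = B := hu A' (((hFs A').symm.trans hFA').trans h.symm).symm
    rw [h1, h2]
  intro i hi
  have := DFunLike.congr_fun hAA' i
  have hcoe : ∀ (c : ℕ → S), ((∑ j ∈ range N, Finsupp.single j (c j)) : ℕ →₀ S) i = c i := by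
    intro c
    rw [Finset.sum_apply']
    rw [Finset.sum_eq_single i (fun j _ hj => Finsupp.single_eq_of_ne' hj)
      (fun h => absurd (Finset.mem_range.2 hi) h)]
    simp
  rwa [hA, hA', hcoe, hcoe] at this

lemma top_coeff_zero {c : S} {N : ℕ} (h : DegLT ι t (ι c * t ^ N) N) : c = 0 := by
  classical
  obtain ⟨a, ha⟩ := h
  have h1 : ∑ i ∈ range (N+1), ι ((fun i => if i = N then c else 0) i) * t ^ i
      = ∑ i ∈ range (N+1), ι ((fun i => if i < N then a i else 0) i) * t ^ i := by
    have l : ∑ i ∈ range (N+1), ι (if i = N then c else 0) * t ^ i = ι c * t ^ N := by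
      have : ∀ i ∈ range (N+1), ι (if i = N then c else 0) * t ^ i
          = if i = N then ι c * t ^ i else 0 := by intro i _; split_ifs <;> simp
      rw [Finset.sum_congr rfl this, Finset.sum_ite_eq' (range (N+1)) N (fun i => ι c * t ^ i)]
      simp
    have r : ∑ i ∈ range (N+1), ι (if i < N then a i else 0) * t ^ i
        = ∑ i ∈ range N, ι (a i) * t ^ i := by
      rw [← Finset.sum_subset (Finset.range_subset_range.2 (Nat.le_succ N))]
      · exact Finset.sum_congr rfl fun i hi => by simp [Finset.mem_range.1 hi]
      · intro i _ hi
        rw [Finset.mem_range] at hi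
        simp [hi]
    simpa [l, r] using ha
  have := coeff_unique ι t hbasis h1 N (Nat.lt_succ_self N)
  simpa using this

end Basis

section Main
variable {S R : Type*} [Ring S] [Ring R] (σ : S →+* S) (ι : S →+* R) (t : R)
    (hrel : ∀ a : S, t * ι a = ι (σ a) * t)
    (hbasis : ∀ g : R, ∃! a : ℕ →₀ S, g = a.sum fun i c => ι c * t ^ i)
    (f : R) (m : ℕ) (b : ℕ → S)
    (hf : f = ∑ i ∈ range m, ι (b i) * t ^ i + ι (b m) * t ^ m)

lemma degLT_sum {α : Type*} (s : Finset α) (g : α → R) (n : ℕ)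
    (h : ∀ i ∈ s, DegLT ι t (g i) n) : DegLT ι t (∑ i ∈ s, g i) n :=
  Finset.sum_induction g (fun x => DegLT ι t x n) (fun _ _ => degLT_add ι t)
    (degLT_zero ι t n) h

include hbasis in
lemma exists_degLT (w : R) : ∃ n, DegLT ι t w n := by
  obtain ⟨A, hA, -⟩ := hbasis w
  refine ⟨A.support.sup id + 1, fun i => A i, ?_⟩
  rw [hA, Finsupp.sum, ← Finset.sum_subset
    (fun i hi => Finset.mem_range.2 (Nat.lt_succ_of_le (Finset.le_sup (f := id) hi)))]
  intro i _ hi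
  show ι (A i) * t ^ i = 0
  rw [Finsupp.notMem_support_iff.1 hi]
  simp

include hrel hf in
lemma tpow_mul_f (n : ℕ) : t ^ n * f =
    (∑ j ∈ range m, ι ((σ ^ n) (b j)) * t ^ (n + j)) + ι ((σ ^ n) (b m)) * t ^ (n + m) := by
  rw [hf, mul_add, Finset.mul_sum]
  congr 1
  · refine Finset.sum_congr rfl fun j _ => ?_
    rw [← mul_assoc, pow_mul_iota σ ι t hrel, mul_assoc, ← pow_add]
  · rw [← mul_assoc, pow_mul_iota σ ι t hrel, mul_assoc, ← pow_add]

include hrel hbasis hf in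
lemma lemmaA_aux (hbm : ∃ u : S, b m * u = 1) :
    ∀ n (w : R), DegLT ι t w n → DegLT ι t (w * f) m → w * f = 0 := by
  obtain ⟨u, hu⟩ := hbm
  intro n
  induction n with
  | zero =>
    intro w hw _
    obtain ⟨a, ha⟩ := hw
    simp at ha
    simp [ha]
  | succ n ih =>
    intro w hw hwf
    obtain ⟨a, ha⟩ := hw
    -- expand w * f
    have hexp : w * f = ((∑ i ∈ range (n+1), ι (a i) *
          ((∑ j ∈ range m, ι ((σ ^ i) (b j)) * t ^ (i + j)))) +
          ∑ i ∈ range n, ι (a i) * (ι ((σ ^ i) (b m)) * t ^ (i + m)))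
        + ι (a n) * (ι ((σ ^ n) (b m)) * t ^ (n + m)) := by
      rw [ha, Finset.sum_mul]
      have : ∀ i ∈ range (n+1), (ι (a i) * t ^ i) * f
          = ι (a i) * ((∑ j ∈ range m, ι ((σ ^ i) (b j)) * t ^ (i + j)))
            + ι (a i) * (ι ((σ ^ i) (b m)) * t ^ (i + m)) := by
        intro i _
        rw [mul_assoc, tpow_mul_f σ ι t hrel f m b hf i, mul_add]
      rw [Finset.sum_congr rfl this, Finset.sum_add_distrib, Finset.sum_range_succ _ n,
        Finset.sum_range_succ (fun x => ι (a x) * (ι ((σ ^ x) (b m)) * t ^ (x + m))) n]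
      abel
    set Z : R := (∑ i ∈ range (n+1), ι (a i) *
          ((∑ j ∈ range m, ι ((σ ^ i) (b j)) * t ^ (i + j)))) +
          ∑ i ∈ range n, ι (a i) * (ι ((σ ^ i) (b m)) * t ^ (i + m)) with hZ
    have hZdeg : DegLT ι t Z (n + m) := by
      apply degLT_add
      · refine degLT_sum ι t _ _ _ fun i hi => degLT_smul ι t _ (degLT_sum ι t _ _ _ ?_)
        intro j hj
        refine degLT_monomial ι t ?_
        have hi' := Finset.mem_range.1 hi
        have hj' := Finset.mem_range.1 hj
        omega
      · refine degLT_sum ι t _ _ _ fun i hi => degLT_smul ι t _ (degLT_monomial ι t ?_)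
        have hi' := Finset.mem_range.1 hi
        omega
    have htop : ι (a n * (σ ^ n) (b m)) * t ^ (n + m) = w * f - Z := by
      rw [hexp, map_mul, mul_assoc, add_sub_cancel_left]
    have hdegtop : DegLT ι t (ι (a n * (σ ^ n) (b m)) * t ^ (n + m)) (n + m) := by
      rw [htop]
      exact degLT_sub ι t (degLT_mono ι t hwf (Nat.le_add_left m n)) hZdeg
    have hzero : a n * (σ ^ n) (b m) = 0 := top_coeff_zero ι t hbasis hdegtop
    have han : a n = 0 := by
      have : a n * ((σ ^ n) (b m) * (σ ^ n) u) = 0 := by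
        rw [← mul_assoc, hzero, zero_mul]
      rwa [← map_mul, hu, map_one, mul_one] at this
    have hw' : DegLT ι t w n := by
      refine ⟨a, ?_⟩
      rw [ha, Finset.sum_range_succ, han]
      simp
    exact ih w hw' hwf

end Main

section Div
variable {S R : Type*} [Ring S] [Ring R] (σ : S →+* S) (ι : S →+* R) (t : R)
    (hrel : ∀ a : S, t * ι a = ι (σ a) * t)
    (hbasis : ∀ g : R, ∃! a : ℕ →₀ S, g = a.sum fun i c => ι c * t ^ i)
    (f : R) (m : ℕ) (b : ℕ → S)
    (hf : f = ∑ i ∈ range m, ι (b i) * t ^ i + ι (b m) * t ^ m)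

include hf in
lemma tpow_m_eq (u : S) (hu1 : u * b m = 1) :
    t ^ m = ι u * f + -(∑ i ∈ range m, ι (u * b i) * t ^ i) := by
  rw [hf, mul_add, Finset.mul_sum]
  have h1 : ι u * (ι (b m) * t ^ m) = t ^ m := by
    rw [← mul_assoc, ← map_mul, hu1, map_one, one_mul]
  have h2 : ∀ i ∈ range m, ι u * (ι (b i) * t ^ i) = ι (u * b i) * t ^ i := by
    intro i _; rw [← mul_assoc, ← map_mul]
  rw [Finset.sum_congr rfl h2, h1]
  abel

include hrel hf in
lemma div_tpow (u : S) (hu1 : u * b m = 1) (hm0 : 0 < m) (n : ℕ) :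
    ∃ q r : R, DegLT ι t r m ∧ t ^ n = q * f + r := by
  induction n with
  | zero =>
    refine ⟨0, 1, ?_, by simp⟩
    simpa using degLT_monomial ι t (c := (1:S)) (k := 0) hm0
  | succ n ih =>
    obtain ⟨q, r, hr, heq⟩ := ih
    obtain ⟨m', hm'⟩ : ∃ m', m = m' + 1 := ⟨m - 1, by omega⟩
    subst hm'
    obtain ⟨a, ha⟩ := hr
    set r₁ : R := -(∑ i ∈ range (m'+1), ι (u * b i) * t ^ i) with hr₁
    have hr₁deg : DegLT ι t r₁ (m'+1) :=
      degLT_neg ι t (degLT_sum ι t _ _ _ fun i hi => degLT_monomial ι t (Finset.mem_range.1 hi))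
    have htr : t * r = (∑ i ∈ range m', ι (σ (a i)) * t ^ (i+1))
        + ι (σ (a m')) * t ^ (m'+1) := by
      rw [ha, Finset.mul_sum]
      have h3 : ∀ i ∈ range (m'+1), t * (ι (a i) * t ^ i) = ι (σ (a i)) * t ^ (i+1) := by
        intro i _
        rw [← mul_assoc, hrel, mul_assoc, ← pow_succ']
      rw [Finset.sum_congr rfl h3, Finset.sum_range_succ]
    have key : t ^ (n+1) = (t * q + ι (σ (a m')) * ι u) * f
        + ((∑ i ∈ range m', ι (σ (a i)) * t ^ (i+1)) + ι (σ (a m')) * r₁) := by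
      have h1 : t ^ (n+1) = t * t ^ n := pow_succ' t n
      rw [h1, heq, mul_add, ← mul_assoc, htr, tpow_m_eq ι t f (m'+1) b hf u hu1, mul_add,
        add_mul, mul_assoc (ι (σ (a m'))) (ι u) f]
      abel
    refine ⟨_, _, ?_, key⟩
    refine degLT_add ι t (degLT_sum ι t _ _ _ fun i hi => degLT_monomial ι t ?_)
      (degLT_smul ι t _ hr₁deg)
    exact Nat.succ_lt_succ (Finset.mem_range.1 hi)

include hrel hbasis hf in
lemma div_general (u : S) (hu1 : u * b m = 1) (hm0 : 0 < m) (g : R) :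
    ∃ q r : R, DegLT ι t r m ∧ g = q * f + r := by
  obtain ⟨n, a, ha⟩ := exists_degLT ι t hbasis g
  choose q r hdeg heq using fun n => div_tpow σ ι t hrel f m b hf u hu1 hm0 n
  refine ⟨∑ i ∈ range n, ι (a i) * q i, ∑ i ∈ range n, ι (a i) * r i, ?_, ?_⟩
  · exact degLT_sum ι t _ _ _ fun i _ => degLT_smul ι t _ (hdeg i)
  · rw [ha, Finset.sum_mul, ← Finset.sum_add_distrib]
    refine Finset.sum_congr rfl fun i _ => ?_
    rw [heq i, mul_add, mul_assoc]

include hrel hbasis hf in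
lemma remainder_unique (hbm : ∃ u : S, b m * u = 1) {q q' r r' : R}
    (hr : DegLT ι t r m) (hr' : DegLT ι t r' m) (h : q * f + r = q' * f + r') : r = r' := by
  have h2 : (q - q') * f = r' - r := by
    rw [sub_mul]
    rw [← sub_eq_zero] at h ⊢
    rw [← h]; abel
  obtain ⟨n, hn⟩ := exists_degLT ι t hbasis (q - q')
  have h3 : DegLT ι t ((q - q') * f) m := h2 ▸ degLT_sub ι t hr' hr
  have h4 := lemmaA_aux σ ι t hrel hbasis f m b hf hbm n _ hn h3
  rw [h4] at h2
  exact (sub_eq_zero.1 h2.symm).symm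

end Div

/-- Let `S` be a unital ring, `σ` an injective endomorphism, and
`f ∈ S[t;σ]` of degree `m ≥ 2` with invertible leading coefficient.  The Petit algebra
`S_f = S[t;σ]/S[t;σ]f` is associative if and only if `S[t;σ]f` is a two-sided ideal of
`S[t;σ]` (the left ideal `Rf` is automatically closed under left multiplication, so being
two-sided amounts to `f·u ∈ Rf` for every `u`). -/
theorem petit_algebra_associative_iff_two_sided {S R : Type*} [Ring S] [Ring R]
    (σ : S →+* S) (hσ : Function.Injective σ)
    (ι : S →+* R) (hι : Function.Injective ι) (t : R)
    (hrel : ∀ a : S, t * ι a = ι (σ a) * t)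
    (hbasis : ∀ g : R, ∃! a : ℕ →₀ S, g = a.sum fun i c => ι c * t ^ i)
    (f : R) (m : ℕ) (hm : 2 ≤ m) (b : ℕ → S)
    (hf : f = ∑ i ∈ range m, ι (b i) * t ^ i + ι (b m) * t ^ m) (hlead : IsUnit (b m)) :
    (∀ g h k r₁ r₂ r₃ r₄ : R, DegLT ι t g m → DegLT ι t h m → DegLT ι t k m →
        PetitMulRel ι t f m g h r₁ → PetitMulRel ι t f m r₁ k r₂ →
        PetitMulRel ι t f m h k r₃ → PetitMulRel ι t f m g r₃ r₄ → r₂ = r₄)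
      ↔ (∀ u : R, ∃ v : R, f * u = v * f) := by
  have hm0 : 0 < m := by omega
  set ub : S := ↑hlead.unit⁻¹ with hub
  have hu1 : ub * b m = 1 := hlead.val_inv_mul
  have hu2 : b m * ub = 1 := hlead.mul_val_inv
  have hbm : ∃ u : S, b m * u = 1 := ⟨ub, hu2⟩
  have hdiv : ∀ g : R, ∃ q r : R, DegLT ι t r m ∧ g = q * f + r :=
    div_general σ ι t hrel hbasis f m b hf ub hu1 hm0
  have ht_deg : DegLT ι t t m := by
    have := degLT_monomial ι t (c := (1:S)) (k := 1) (by omega : 1 < m)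
    simpa using this
  constructor
  · intro hassoc
    have step1 : ∀ k : R, DegLT ι t k m → ∃ v, f * k = v * f := by
      intro k hk
      obtain ⟨m', rfl⟩ : ∃ m', m = m' + 2 := ⟨m - 2, by omega⟩
      set r₁ : R := -(∑ i ∈ range (m'+2), ι (ub * b i) * t ^ i) with hr₁
      have hr₁deg : DegLT ι t r₁ (m'+2) :=
        degLT_neg ι t (degLT_sum ι t _ _ _ fun i hi => degLT_monomial ι t (Finset.mem_range.1 hi))
      have htm : t ^ (m'+2) = ι ub * f + r₁ := tpow_m_eq ι t f (m'+2) b hf ub hu1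
      obtain ⟨q₂, r₂, hr₂, he₂⟩ := hdiv (r₁ * k)
      obtain ⟨q₃, r₃, hr₃, he₃⟩ := hdiv (t * k)
      obtain ⟨q₄, r₄, hr₄, he₄⟩ := hdiv (t ^ (m'+1) * r₃)
      have hgdeg : DegLT ι t (t ^ (m'+1)) (m'+2) := by
        have := degLT_monomial ι t (c := (1:S)) (k := m'+1) (by omega : m'+1 < m'+2)
        simpa using this
      have rel1 : PetitMulRel ι t f (m'+2) (t ^ (m'+1)) t r₁ := by
        refine ⟨hr₁deg, ι ub, ?_⟩
        rw [← pow_succ, htm]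
      have rel2 : PetitMulRel ι t f (m'+2) r₁ k r₂ := ⟨hr₂, q₂, he₂⟩
      have rel3 : PetitMulRel ι t f (m'+2) t k r₃ := ⟨hr₃, q₃, he₃⟩
      have rel4 : PetitMulRel ι t f (m'+2) (t ^ (m'+1)) r₃ r₄ := ⟨hr₄, q₄, he₄⟩
      have h24 : r₂ = r₄ := hassoc _ _ _ _ _ _ _ hgdeg ht_deg hk rel1 rel2 rel3 rel4
      have key : ι ub * (f * k) = (t ^ (m'+1) * q₃ + q₄ - q₂) * f := by
        have e1 : ι ub * f = t ^ (m'+2) - r₁ := by rw [htm]; abel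
        calc ι ub * (f * k) = (t ^ (m'+2) - r₁) * k := by rw [← mul_assoc, e1]
          _ = t ^ (m'+1) * (t * k) - r₁ * k := by
              rw [sub_mul, ← mul_assoc, ← pow_succ]
          _ = t ^ (m'+1) * (q₃ * f + r₃) - (q₂ * f + r₂) := by rw [he₃, he₂]
          _ = t ^ (m'+1) * q₃ * f + (q₄ * f + r₄) - (q₂ * f + r₂) := by
              rw [mul_add, ← mul_assoc, he₄]
          _ = (t ^ (m'+1) * q₃ + q₄ - q₂) * f + (r₄ - r₂) := by noncomm_ring
          _ = (t ^ (m'+1) * q₃ + q₄ - q₂) * f := by rw [← h24, sub_self, add_zero]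
      have hone : ι (b (m'+2)) * ι ub = 1 := by rw [← map_mul, hu2, map_one]
      refine ⟨ι (b (m'+2)) * (t ^ (m'+1) * q₃ + q₄ - q₂), ?_⟩
      calc f * k = (ι (b (m'+2)) * ι ub) * (f * k) := by rw [hone, one_mul]
        _ = ι (b (m'+2)) * (ι ub * (f * k)) := by rw [mul_assoc]
        _ = ι (b (m'+2)) * ((t ^ (m'+1) * q₃ + q₄ - q₂) * f) := by rw [key]
        _ = _ := by rw [← mul_assoc]
    have step_pow : ∀ (i : ℕ) (c : S), ∃ v, f * (ι c * t ^ i) = v * f := by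
      intro i
      induction i with
      | zero =>
        intro c
        obtain ⟨v, hv⟩ := step1 (ι c)
          (by simpa using degLT_monomial ι t (c := c) (k := 0) hm0)
        exact ⟨v, by simpa using hv⟩
      | succ i ih =>
        intro c
        obtain ⟨vc, hvc⟩ := ih c
        obtain ⟨vt, hvt⟩ := step1 t ht_deg
        refine ⟨vc * vt, ?_⟩
        have h1 : f * (ι c * t ^ (i+1)) = (f * (ι c * t ^ i)) * t := by
          simp [pow_succ, mul_assoc]
        rw [h1, hvc, mul_assoc, hvt, ← mul_assoc]
    intro u0
    obtain ⟨n, a, ha⟩ := exists_degLT ι t hbasis u0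
    choose v hv using fun i => step_pow i (a i)
    refine ⟨∑ i ∈ range n, v i, ?_⟩
    rw [ha, Finset.mul_sum, Finset.sum_mul]
    exact Finset.sum_congr rfl fun i _ => hv i
  · intro htwo g h k r₁ r₂ r₃ r₄ _ _ _ rel1 rel2 rel3 rel4
    obtain ⟨hr₁, q₁, e₁⟩ := rel1
    obtain ⟨hr₂, q₂, e₂⟩ := rel2
    obtain ⟨hr₃, q₃, e₃⟩ := rel3
    obtain ⟨hr₄, q₄, e₄⟩ := rel4
    obtain ⟨v, hv⟩ := htwo k
    have E1 : g * h * k = (q₁ * v + q₂) * f + r₂ := by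
      calc g * h * k = (q₁ * f + r₁) * k := by rw [e₁]
        _ = q₁ * (f * k) + r₁ * k := by rw [add_mul, mul_assoc]
        _ = q₁ * (v * f) + (q₂ * f + r₂) := by rw [hv, e₂]
        _ = (q₁ * v + q₂) * f + r₂ := by noncomm_ring
    have E2 : g * h * k = (g * q₃ + q₄) * f + r₄ := by
      calc g * h * k = g * (q₃ * f + r₃) := by rw [mul_assoc, e₃]
        _ = g * q₃ * f + (q₄ * f + r₄) := by rw [mul_add, ← mul_assoc, e₄]
        _ = (g * q₃ + q₄) * f + r₄ := by rw [add_mul, add_assoc]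
    exact remainder_unique σ ι t hrel hbasis f m b hf hbm hr₂ hr₄ (E1.symm.trans E2)
end

section
/- Let A = (D,σ,d) be a nonassociative generalized cyclic Azumaya algebra and let k ∈ C be such that k = c⁻¹σ(c) for some c ∈ C^×. Then the automorphism H_{id,k} of A is the inner automorphism G_c given by G_c(∑ a_i t^i) = (c⁻¹ ∑ a_i t^i)·c, i.e., H_{id,k}(∑ a_i t^i) = ∑ a_i c⁻¹σ^i(c) t^i. -/
/-! Both `c` and `c⁻¹` live in degree 0 of `(D,σ,d)`, so left multiplication by the central
`c⁻¹` scales every coefficient and right multiplication by `c` twists the coefficient of `tⁱ`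
by `σⁱ(c)`; thus `G_c` multiplies `aᵢ` by `c⁻¹σⁱ(c)`. The product `∏_{l<i} σˡ(c⁻¹σ(c))`
defining `H_{id,k}` telescopes to the same element. -/

open Finset

/-- The multiplication of the Petit algebra `(D,σ,d) = D[t;σ]/D[t;σ](t^m − d)` on
coefficient vectors `Fin m → D`. -/
def pmul {D : Type*} [Ring D] (σ : D ≃+* D) (d : D) (m : ℕ) (a b : Fin m → D) :
    Fin m → D := fun k =>
  ∑ i : Fin m, ∑ j : Fin m,
    if (i : ℕ) + j = k then a i * (σ ^ (i : ℕ)) (b j)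
    else if (i : ℕ) + j = (k : ℕ) + m then a i * (σ ^ (i : ℕ)) (b j) * (σ ^ (k : ℕ)) d
    else 0

/-- `C/S₀` is a cyclic Galois extension of degree `m` with group `⟨σ|_C⟩`, where `C` is the
center of `D` (Chase–Harrison–Rosenberg Galois coordinates). -/
def CenterCyclicGalois {D : Type*} [Ring D] (σ : D ≃+* D) (m : ℕ) : Prop :=
  0 < m ∧ (∀ c ∈ Subring.center D, (σ ^ m) c = c) ∧
    ∀ j < m, ∃ (n : ℕ) (x y : Fin n → D),
      (∀ l, x l ∈ Subring.center D ∧ y l ∈ Subring.center D) ∧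
      ∀ i < m, (∑ l, x l * (σ ^ i) (y l)) = if i = j then 1 else 0

theorem List.prod_map_range_pow_apply_coboundary {D : Type*} [Semiring D] (σ : D ≃+* D)
    {c c' : D} (hc : c * c' = 1) (hc' : c' * c = 1) (i : ℕ) :
    ((List.range i).map fun l => (σ ^ l) (c' * σ c)).prod = c' * (σ ^ i) c := by
  induction i with
  | zero => simpa using hc'.symm
  | succ n ih =>
    rw [List.range_succ, List.map_append, List.prod_append, ih, List.map_singleton,
      List.prod_singleton, map_mul, ← mul_assoc, mul_assoc c', ← map_mul, hc,
      map_one, mul_one, pow_succ, RingAut.mul_apply]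

section
variable {D : Type*} [Ring D] (σ : D ≃+* D) (d : D) {m : ℕ} (hm : 0 < m)

theorem pmul_single_zero_left (x : D) (a : Fin m → D) :
    pmul σ d m (Pi.single ⟨0, hm⟩ x) a = fun k => x * a k := by
  funext k
  rw [pmul, Fintype.sum_eq_single ⟨0, hm⟩ fun i hi => by simp [Pi.single_eq_of_ne hi],
    Fintype.sum_eq_single k fun j hj => ?_]
  · simp
  · have hjk : (j : ℕ) ≠ k := Fin.val_ne_of_ne hj
    rw [if_neg (by dsimp only; omega), if_neg (by dsimp only; omega)]

theorem pmul_single_zero_right (x : D) (a : Fin m → D) :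
    pmul σ d m a (Pi.single ⟨0, hm⟩ x) = fun k => a k * (σ ^ (k : ℕ)) x := by
  funext k
  rw [pmul, Fintype.sum_eq_single k fun i hi => ?_]
  · rw [Fintype.sum_eq_single ⟨0, hm⟩ fun j hj => by simp [Pi.single_eq_of_ne hj]]
    simp
  · refine Fintype.sum_eq_zero _ fun j => ?_
    by_cases hj : j = ⟨0, hm⟩
    · have hik : (i : ℕ) ≠ k := Fin.val_ne_of_ne hi
      rw [hj, if_neg (by dsimp only; omega), if_neg (by dsimp only; omega)]
    · simp [Pi.single_eq_of_ne hj]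
end

theorem H_id_k_is_inner_general {D : Type*} [Ring D]
    (σ : D ≃+* D) (m : ℕ) (hGal : CenterCyclicGalois σ m)
    (d : D)
    (c c' : D) (hc'C : c' ∈ Subring.center D)
    (hc1 : c * c' = 1) (hc2 : c' * c = 1)
    (k : D) (hk : k = c' * σ c) :
    ∀ a : Fin m → D,
      (fun i : Fin m => a i * ((List.range (i : ℕ)).map fun l => (σ ^ l) k).prod)
        = pmul σ d m (pmul σ d m (Pi.single (⟨0, hGal.1⟩ : Fin m) c') a)
            (Pi.single (⟨0, hGal.1⟩ : Fin m) c) ∧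
      (fun i : Fin m => a i * ((List.range (i : ℕ)).map fun l => (σ ^ l) k).prod)
        = fun i : Fin m => a i * (c' * (σ ^ (i : ℕ)) c) := by
  intro a
  have hH : (fun i : Fin m => a i * ((List.range (i : ℕ)).map fun l => (σ ^ l) k).prod)
      = fun i : Fin m => a i * (c' * (σ ^ (i : ℕ)) c) := by
    funext i
    rw [hk, List.prod_map_range_pow_apply_coboundary σ hc1 hc2]
  refine ⟨?_, hH⟩
  rw [pmul_single_zero_left σ d hGal.1, pmul_single_zero_right σ d hGal.1, hH]
  funext i
  rw [← mul_assoc, Subring.mem_center_iff.mp hc'C (a i)]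

/-- Let `A = (D,σ,d)` be a nonassociative generalized cyclic Azumaya algebra
and let `k = c⁻¹σ(c)` for some `c ∈ Cˣ`.  Then the automorphism `H_{id,k}` of `A` is the
inner automorphism `G_c : x ↦ (c⁻¹x)·c`; explicitly,
`H_{id,k}(∑ aᵢ tⁱ) = ∑ aᵢ c⁻¹σ^i(c) tⁱ = (c⁻¹ ∑ aᵢ tⁱ)·c`. -/
theorem H_id_k_is_inner {D : Type*} [Ring D]
    (σ : D ≃+* D) (m : ℕ) (hGal : CenterCyclicGalois σ m)
    (d : D) (hd : IsUnit d)
    (c c' : D) (hcC : c ∈ Subring.center D) (hc'C : c' ∈ Subring.center D)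
    (hc1 : c * c' = 1) (hc2 : c' * c = 1)
    (k : D) (hk : k = c' * σ c) :
    ∀ a : Fin m → D,
      (fun i : Fin m => a i * ((List.range (i : ℕ)).map fun l => (σ ^ l) k).prod)
        = pmul σ d m (pmul σ d m (Pi.single (⟨0, hGal.1⟩ : Fin m) c') a)
            (Pi.single (⟨0, hGal.1⟩ : Fin m) c) ∧
      (fun i : Fin m => a i * ((List.range (i : ℕ)).map fun l => (σ ^ l) k).prod)
        = fun i : Fin m => a i * (c' * (σ ^ (i : ℕ)) c) :=
  H_id_k_is_inner_general σ m hGal d c c' hc'C hc1 hc2 k hk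
end
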